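/- arXiv:1101.3534 — 7 statements merged into one kernel-verified Lean document; each statement's English description precedes it below -/
import Mathlib

section
/- Let $\mu \in \mathbb{R}$ and let $\beta \in C[0,1]$ with $\beta \neq 0$. Define $B_0 := \{x \in [0,1] : \beta(x) = 0\}$ and $A_2 := \{\zeta \in L^2[0,1] : \zeta(x) + \mu \neq 0 \text{ for a.e. } x \in [0,1]\setminus B_0\}$. Then the algebraic interior (core) of $A_2$ in $L^2[0,1]$ is empty. -/
open MeasureTheory Set Filter Topology Function
open scoped ENNReal

/-! Given `ζ₀`, pick an open `U ⊆ (0,1)` on which `β ≠ 0`, and a subset `E ⊆ U` of positive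
measure on which `g = ζ₀ + μ` is bounded. The function `x ↦ |E ∩ (-∞, x]|` is continuous, so by
the intermediate value theorem `E` splits into disjoint pieces `Sₙ` of measure `≍ 8⁻ⁿ`. The
direction `u = -2ⁿ g` on `Sₙ` lies in `L²`, yet `ζ₀ + 2⁻ⁿ u + μ` vanishes on `Sₙ ⊆ [0,1] \ B₀`,
so `ζ₀ + t u` leaves `A₂` for arbitrarily small `t > 0`. -/

theorem exists_isOpen_subset_interior_ne {X Y : Type*} [TopologicalSpace X] [TopologicalSpace Y]
    [T1Space Y] {s : Set X} (hs : s ⊆ closure (interior s)) {f : X → Y} (hf : ContinuousOn f s)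
    {x₀ : X} (hx₀ : x₀ ∈ s) {c : Y} (hfx₀ : f x₀ ≠ c) :
    ∃ U, IsOpen U ∧ U.Nonempty ∧ U ⊆ interior s ∧ ∀ x ∈ U, f x ≠ c := by
  obtain ⟨V, hVo, hx₀V, hV⟩ := mem_nhdsWithin.1 ((hf x₀ hx₀).eventually_ne hfx₀)
  exact ⟨V ∩ interior s, hVo.inter isOpen_interior,
    mem_closure_iff.1 (hs hx₀) V hVo hx₀V, inter_subset_right,
    fun x hx => hV ⟨hx.1, interior_subset hx.2⟩⟩

theorem exists_measure_inter_norm_le_ne_zero {α E : Type*} [MeasurableSpace α]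
    [SeminormedAddGroup E] {μ : Measure α} {s : Set α} (hs : μ s ≠ 0) (g : α → E) :
    ∃ M : ℕ, μ (s ∩ {x | ‖g x‖ ≤ M}) ≠ 0 := by
  by_contra! h
  refine hs (measure_mono_null (fun x hx => ?_) (measure_iUnion_null h))
  obtain ⟨M, hM⟩ := exists_nat_ge ‖g x‖
  exact mem_iUnion.2 ⟨M, hx, hM⟩

section CumulativeMeasure

variable {ρ : Measure ℝ} [IsFiniteMeasure ρ]

theorem lipschitzWith_measureReal_Iic (hρ : ρ ≤ volume) :
    LipschitzWith 1 fun x => ρ.real (Iic x) := by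
  refine LipschitzWith.of_le_add fun x y => ?_
  calc ρ.real (Iic x) ≤ ρ.real (Iic y ∪ Ioc y x) := measureReal_mono Iic_subset_Iic_union_Ioc
    _ ≤ ρ.real (Iic y) + ρ.real (Ioc y x) := measureReal_union_le _ _
    _ ≤ ρ.real (Iic y) + volume.real (Ioc y x) := by
      gcongr
      exact ENNReal.toReal_mono measure_Ioc_lt_top.ne (hρ _)
    _ ≤ ρ.real (Iic y) + dist x y := by
      rw [Real.volume_real_Ioc, Real.dist_eq]
      gcongr
      exact max_le (le_abs_self _) (abs_nonneg _)

theorem exists_measureReal_Iic_eq (hρ : ρ ≤ volume) {c : ℝ} (hc : c ∈ Ioo 0 (ρ.real univ)) :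
    ∃ η, ρ.real (Iic η) = c := by
  have hbot : Tendsto (fun x => ρ.real (Iic x)) atBot (𝓝 0) := by
    have := tendsto_measure_iInter_atBot (μ := ρ) (fun x => nullMeasurableSet_Iic)
      (monotone_Iic (α := ℝ)) ⟨0, measure_ne_top ρ _⟩
    have hempty : ⋂ x : ℝ, Iic x = ∅ :=
      eq_empty_of_forall_notMem fun x hx => by linarith [mem_Iic.1 (mem_iInter.1 hx (x - 1))]
    rw [hempty, measure_empty] at this
    exact (ENNReal.tendsto_toReal ENNReal.zero_ne_top).comp this
  have htop : Tendsto (fun x => ρ.real (Iic x)) atTop (𝓝 (ρ.real univ)) :=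
    (ENNReal.tendsto_toReal (measure_ne_top ρ univ)).comp (tendsto_measure_Iic_atTop ρ)
  exact mem_range_of_exists_le_of_exists_ge (lipschitzWith_measureReal_Iic hρ).continuous
    (hbot.eventually (ge_mem_nhds hc.1)).exists (htop.eventually (le_mem_nhds hc.2)).exists

theorem exists_strictMono_measureReal_Iic_eq {ι : Type*} [Preorder ι] (hρ : ρ ≤ volume)
    {m : ι → ℝ} (hm : StrictMono m) (hm_mem : ∀ i, m i ∈ Ioo 0 (ρ.real univ)) :
    ∃ η : ι → ℝ, StrictMono η ∧ ∀ i, ρ.real (Iic (η i)) = m i := by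
  choose η hη using fun i => exists_measureReal_Iic_eq hρ (hm_mem i)
  refine ⟨η, fun a b hab => not_le.1 fun hba => (hm hab).not_ge ?_, hη⟩
  rw [← hη, ← hη]
  exact measureReal_mono (Iic_subset_Iic.2 hba)

theorem exists_pairwise_disjoint_measureReal_eq_geometric (hρ : ρ ≤ volume) (hρ0 : ρ univ ≠ 0)
    {r : ℝ} (hr0 : 0 < r) (hr1 : r < 1) :
    ∃ I : ℕ → Set ℝ, Pairwise (Disjoint on I) ∧ (∀ n, MeasurableSet (I n)) ∧
      ∀ n, ρ.real (I n) = ρ.real univ * (1 - r) * r ^ (n + 1) := by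
  have hV : 0 < ρ.real univ := ENNReal.toReal_pos hρ0 (measure_ne_top ρ _)
  obtain ⟨η, hη, hηm⟩ := exists_strictMono_measureReal_Iic_eq hρ
    (m := fun n => ρ.real univ * (1 - r ^ (n + 1)))
    (fun a b hab => mul_lt_mul_of_pos_left
      (sub_lt_sub_left (pow_lt_pow_right_of_lt_one₀ hr0 hr1 (by omega)) 1) hV)
    (fun n => by
      have h0 : 0 < r ^ (n + 1) := pow_pos hr0 _
      have h1 : r ^ (n + 1) < 1 := pow_lt_one₀ hr0.le hr1 (Nat.succ_ne_zero n)
      constructor <;> nlinarith)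
  refine ⟨fun n => Ioc (η n) (η (n + 1)), hη.monotone.pairwise_disjoint_on_Ioc_succ,
    fun n => measurableSet_Ioc, fun n => ?_⟩
  change ρ.real (Ioc (η n) (η (n + 1))) = _
  rw [← Iic_sdiff_Iic, measureReal_sdiff (Iic_subset_Iic.2 (hη (Nat.lt_add_one n)).le)
    measurableSet_Iic, hηm, hηm]
  ring

end CumulativeMeasure

theorem exists_pairwise_disjoint_subset_measureReal_eq_geometric {μ : Measure ℝ}
    [IsFiniteMeasure μ] (hμ : μ ≤ volume) {E : Set ℝ} (hE : MeasurableSet E) (hE0 : μ E ≠ 0)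
    {r : ℝ} (hr0 : 0 < r) (hr1 : r < 1) :
    ∃ S : ℕ → Set ℝ, Pairwise (Disjoint on S) ∧ (∀ n, MeasurableSet (S n)) ∧ (∀ n, S n ⊆ E) ∧
      ∀ n, μ.real (S n) = μ.real E * (1 - r) * r ^ (n + 1) := by
  obtain ⟨I, hIdisj, hImeas, hI⟩ := exists_pairwise_disjoint_measureReal_eq_geometric
    (ρ := μ.restrict E) (Measure.restrict_le_self.trans hμ) (by rwa [Measure.restrict_apply_univ])
    hr0 hr1
  refine ⟨fun n => I n ∩ E, hIdisj.mono fun a b h => h.mono inter_subset_left inter_subset_left,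
    fun n => (hImeas n).inter hE, fun n => inter_subset_right, fun n => ?_⟩
  rw [← measureReal_restrict_apply (hImeas n), hI, measureReal_restrict_apply_univ]

theorem exists_measurable_eq_mul_on_pieces {α : Type*} [MeasurableSpace α] {S : ℕ → Set α}
    (hS : Pairwise (Disjoint on S)) (hSm : ∀ n, MeasurableSet (S n)) (c : ℕ → ℝ)
    {g : α → ℝ} (hg : Measurable g) :
    ∃ u : α → ℝ, Measurable u ∧ (∀ n, ∀ x ∈ S n, u x = c n * g x) ∧
      ∀ x ∉ ⋃ n, S n, u x = 0 := by
  refine ⟨fun x => ∑' n, (S n).indicator (fun y => c n * g y) x,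
    Measurable.tsum fun n => (hg.const_mul (c n)).indicator (hSm n), fun n x hx => ?_,
    fun x hx => ?_⟩
  · dsimp only
    rw [tsum_eq_single n fun m hm => indicator_of_notMem (disjoint_left.1 (hS hm.symm) hx) _,
      indicator_of_mem hx]
  · simp only [mem_iUnion, not_exists] at hx
    simp [indicator_of_notMem (hx _)]

theorem memLp_two_of_abs_le_on_pieces {α : Type*} [MeasurableSpace α] {μ : Measure α}
    [IsFiniteMeasure μ] {S : ℕ → Set α} (hSm : ∀ n, MeasurableSet (S n)) {u : α → ℝ}
    (hu : AEStronglyMeasurable u μ) {C : ℕ → ℝ} (hC : ∀ n, ∀ x ∈ S n, |u x| ≤ C n)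
    (hu0 : ∀ x ∉ ⋃ n, S n, u x = 0) (hsum : Summable fun n => C n ^ 2 * μ.real (S n)) :
    MemLp u 2 μ := by
  rw [memLp_two_iff_integrable_sq hu]
  refine ⟨hu.pow 2, ?_⟩
  rw [hasFiniteIntegral_iff_ofReal (ae_of_all _ fun x => sq_nonneg (u x))]
  have hbound : ∀ x, ENNReal.ofReal (u x ^ 2) ≤
      ∑' n, (S n).indicator (fun _ => ENNReal.ofReal (C n ^ 2)) x := by
    intro x
    by_cases hx : x ∈ ⋃ n, S n
    · obtain ⟨n, hxn⟩ := mem_iUnion.1 hx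
      calc ENNReal.ofReal (u x ^ 2) ≤ ENNReal.ofReal (C n ^ 2) :=
            ENNReal.ofReal_le_ofReal (sq_le_sq.2 ((hC n x hxn).trans (le_abs_self _)))
        _ ≤ _ := by
            rw [← indicator_of_mem hxn (fun _ => ENNReal.ofReal (C n ^ 2))]
            exact ENNReal.le_tsum n
    · simp [hu0 x hx]
  calc ∫⁻ x, ENNReal.ofReal (u x ^ 2) ∂μ
      ≤ ∫⁻ x, ∑' n, (S n).indicator (fun _ => ENNReal.ofReal (C n ^ 2)) x ∂μ :=
        lintegral_mono hbound
    _ = ∑' n, ENNReal.ofReal (C n ^ 2 * μ.real (S n)) := by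
        rw [lintegral_tsum fun n => (measurable_const.indicator (hSm n)).aemeasurable]
        congr 1 with n
        rw [lintegral_indicator_const (hSm n), ENNReal.ofReal_mul (sq_nonneg _),
          ofReal_measureReal]
    _ < ⊤ := by
        rw [← ENNReal.ofReal_tsum_of_nonneg (fun n => by positivity) hsum]
        exact ENNReal.ofReal_lt_top

theorem exists_memLp_two_eq_mul_on_pieces {α : Type*} [MeasurableSpace α] {μ : Measure α}
    [IsFiniteMeasure μ] {S : ℕ → Set α} (hS : Pairwise (Disjoint on S))
    (hSm : ∀ n, MeasurableSet (S n)) (c : ℕ → ℝ) {g : α → ℝ} (hg : Measurable g) {M : ℝ}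
    (hgM : ∀ n, ∀ x ∈ S n, |g x| ≤ M) (hc : Summable fun n => c n ^ 2 * μ.real (S n)) :
    ∃ u, MemLp u 2 μ ∧ ∀ n, ∀ x ∈ S n, u x = c n * g x := by
  obtain ⟨u, hum, hu_on, hu_off⟩ := exists_measurable_eq_mul_on_pieces hS hSm c hg
  refine ⟨u, memLp_two_of_abs_le_on_pieces hSm hum.aestronglyMeasurable
    (C := fun n => |c n| * M) (fun n x hx => ?_) hu_off ?_, hu_on⟩
  · rw [hu_on n x hx, abs_mul]
    exact mul_le_mul_of_nonneg_left (hgM n x hx) (abs_nonneg _)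
  · refine (hc.mul_left (M ^ 2)).congr fun n => ?_
    rw [mul_pow, sq_abs]
    ring

theorem exists_memLp_two_forall_exists_add_mul_eq_zero {μ : Measure ℝ} [IsFiniteMeasure μ]
    (hμ : μ ≤ volume) {E : Set ℝ} (hE : MeasurableSet E) (hE0 : μ E ≠ 0) {g : ℝ → ℝ}
    (hg : Measurable g) {M : ℝ} (hgM : ∀ x ∈ E, |g x| ≤ M) :
    ∃ u, MemLp u 2 μ ∧
      ∀ δ > 0, ∃ t ∈ Ioc 0 δ, ∃ S ⊆ E, μ S ≠ 0 ∧ ∀ x ∈ S, g x + t * u x = 0 := by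
  obtain ⟨S, hSdisj, hSmeas, hSE, hS⟩ :=
    exists_pairwise_disjoint_subset_measureReal_eq_geometric hμ hE hE0 (r := 1 / 8)
      (by norm_num) (by norm_num)
  -- weights `2ⁿ` on pieces of measure `≍ 8⁻ⁿ`: `∑ 4ⁿ 8⁻ⁿ < ∞`, while the steps `2⁻ⁿ` tend to `0`
  have hpow : ∀ n : ℕ, ((2 : ℝ) ^ n) ^ 2 * (1 / 8) ^ n = (1 / 2) ^ n := fun n => by
    rw [← pow_mul, mul_comm n 2, pow_mul, ← mul_pow]
    norm_num
  obtain ⟨u, hu, hu_on⟩ := exists_memLp_two_eq_mul_on_pieces hSdisj hSmeas (fun n => -2 ^ n) hg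
    (fun n x hx => hgM x (hSE n hx))
    ((summable_geometric_two.mul_left (μ.real E * (7 / 64))).congr fun n => by
      rw [hS n, neg_sq, ← hpow n]
      ring)
  refine ⟨u, hu, fun δ hδ => ?_⟩
  obtain ⟨n, hn⟩ := exists_pow_lt_of_lt_one hδ (by norm_num : (1 / 2 : ℝ) < 1)
  refine ⟨(1 / 2) ^ n, ⟨by positivity, hn.le⟩, S n, hSE n, fun h0 => ?_, fun x hx => ?_⟩
  · have hE_pos : 0 < μ.real E := ENNReal.toReal_pos hE0 (measure_ne_top μ E)
    have hS_pos : 0 < μ.real (S n) := by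
      rw [hS n]
      positivity
    exact hS_pos.ne' (by rw [measureReal_def, h0, ENNReal.toReal_zero])
  · rw [hu_on n x hx, ← mul_assoc, mul_neg, ← mul_pow]
    norm_num

theorem MeasureTheory.Lp.coeFn_add_smul_toLp {α E : Type*} [MeasurableSpace α] {μ : Measure α}
    [NormedAddCommGroup E] [NormedSpace ℝ E] {p : ℝ≥0∞} [Fact (1 ≤ p)] (f : Lp E p μ) (t : ℝ)
    {u : α → E} (hu : MemLp u p μ) :
    ⇑(f + t • hu.toLp u) =ᵐ[μ] fun x => f x + t • u x := by
  filter_upwards [Lp.coeFn_add f (t • hu.toLp u), Lp.coeFn_smul t (hu.toLp u), hu.coeFn_toLp]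
    with x h_add h_smul h_toLp
  rw [h_add, Pi.add_apply, h_smul, Pi.smul_apply, h_toLp]

theorem stmt_2 (μ : ℝ) (β : ℝ → ℝ)
    (hβC : ContinuousOn β (Set.Icc 0 1))
    (hβne : ∃ x ∈ Set.Icc (0:ℝ) 1, β x ≠ 0)
    (B₀ : Set ℝ) (hB₀ : B₀ = {x ∈ Set.Icc (0:ℝ) 1 | β x = 0})
    (A₂ : Set (Lp ℝ 2 (volume.restrict (Set.Icc (0:ℝ) 1))))
    (hA₂ : ∀ ζ : Lp ℝ 2 (volume.restrict (Set.Icc (0:ℝ) 1)),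
      ζ ∈ A₂ ↔ ∀ᵐ x ∂(volume.restrict (Set.Icc (0:ℝ) 1)),
        x ∉ B₀ → (ζ : ℝ → ℝ) x + μ ≠ 0) :
    {ζ₀ ∈ A₂ | ∀ u : Lp ℝ 2 (volume.restrict (Set.Icc (0:ℝ) 1)),
      ∃ δ > 0, ∀ t ∈ Set.Icc (0:ℝ) δ, ζ₀ + t • u ∈ A₂} = ∅ := by
  rw [eq_empty_iff_forall_notMem]
  rintro ζ₀ ⟨-, hcore⟩
  obtain ⟨x₀, hx₀, hβx₀⟩ := hβne
  obtain ⟨U, hUo, hUne, hUI, hβU⟩ := exists_isOpen_subset_interior_ne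
    (by rw [interior_Icc, closure_Ioo zero_ne_one]) hβC hx₀ hβx₀
  have hU0 : volume.restrict (Icc (0:ℝ) 1) U ≠ 0 := by
    rw [Measure.restrict_apply' measurableSet_Icc, inter_eq_left.2 (hUI.trans interior_subset)]
    exact hUo.measure_ne_zero volume hUne
  set g : ℝ → ℝ := fun x => ζ₀ x + μ
  have hg : Measurable g := (Lp.stronglyMeasurable ζ₀).measurable.add_const μ
  obtain ⟨M, hM⟩ := exists_measure_inter_norm_le_ne_zero hU0 g
  obtain ⟨u, hu, hu_zero⟩ := exists_memLp_two_forall_exists_add_mul_eq_zero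
    Measure.restrict_le_self (hUo.measurableSet.inter (measurableSet_le hg.norm measurable_const))
    hM hg (fun x hx => hx.2)
  obtain ⟨δ, hδ, hδA⟩ := hcore (hu.toLp u)
  obtain ⟨t, ht, S, hSE, hS0, hS⟩ := hu_zero δ hδ
  refine hS0 (measure_eq_zero_iff_ae_notMem.2 ?_)
  filter_upwards [(hA₂ _).1 (hδA t (Ioc_subset_Icc_self ht)), Lp.coeFn_add_smul_toLp ζ₀ t hu]
    with x hx hx_eq hxS
  refine hx (fun hxB => hβU x (hSE hxS).1 (hB₀ ▸ hxB).2) ?_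
  rw [hx_eq, smul_eq_mul, add_right_comm]
  exact hS x hxS
end

section
/- Let $\mu, \nu, \alpha > 0$ with $\nu\alpha^2 > 2\mu$, set $\eta := (\nu\alpha^2 - 2\mu)^3/(27\nu)$, and define $g(\varsigma) := (2\nu^{-1}\varsigma + \alpha^2)(\mu + \varsigma)^2$. If $\tau^2 > \eta$, then the equation $g(\varsigma) = \tau^2$ has exactly one real solution, and this solution satisfies $\varsigma > -\mu$. -/
/-!
Since `27 ν g(ς) - (ν α² - 2μ)³ = (3ς + μ + ν α²)² (6ς - ν α² + 8μ)`, the cubic `g` stays below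
`η` on `(-∞, -μ]`, so every solution of `g(ς) = τ² > η > 0` lies in `(-μ, ∞)`. There `g` is the
product of two nonnegative strictly increasing factors, and it tends to `+∞`; as `g(-μ) = 0`,
the intermediate value theorem gives exactly one solution.
-/

open Set Filter

theorem existsUnique_mem_Ioi_of_strictMonoOn {α δ : Type*} [ConditionallyCompleteLinearOrder α]
    [TopologicalSpace α] [OrderTopology α] [DenselyOrdered α] [LinearOrder δ]
    [TopologicalSpace δ] [OrderClosedTopology δ] {f : α → δ} {a : α} {y : δ}
    (hcont : ContinuousOn f (Ici a)) (hmono : StrictMonoOn f (Ici a))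
    (htop : Tendsto f atTop atTop) (hy : f a < y) :
    ∃! x, x ∈ Ioi a ∧ f x = y := by
  obtain ⟨x, hx, rfl⟩ := intermediate_value_Ioi hcont htop hy
  refine ⟨x, ⟨hx, rfl⟩, fun x' ⟨hx', hfx'⟩ => ?_⟩
  exact hmono.injOn (mem_Ici_of_Ioi hx') (mem_Ici_of_Ioi hx) hfx'

section Cubic

variable {μ ν α : ℝ}

theorem cubic_le_of_le_neg (hν : 0 < ν) (h2μ : 2 * μ ≤ ν * α ^ 2) {ς : ℝ} (hς : ς ≤ -μ) :
    (2 * ν⁻¹ * ς + α ^ 2) * (μ + ς) ^ 2 ≤ (ν * α ^ 2 - 2 * μ) ^ 3 / (27 * ν) := by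
  rw [le_div_iff₀ (by positivity)]
  have hfactor : (2 * ν⁻¹ * ς + α ^ 2) * (μ + ς) ^ 2 * (27 * ν) - (ν * α ^ 2 - 2 * μ) ^ 3
      = (3 * ς + μ + ν * α ^ 2) ^ 2 * (6 * ς - ν * α ^ 2 + 8 * μ) := by
    field_simp
    ring
  nlinarith [mul_nonpos_of_nonneg_of_nonpos (sq_nonneg (3 * ς + μ + ν * α ^ 2))
    (by linarith : 6 * ς - ν * α ^ 2 + 8 * μ ≤ 0)]

theorem strictMonoOn_cubic (hν : 0 < ν) (h2μ : 2 * μ ≤ ν * α ^ 2) :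
    StrictMonoOn (fun ς => (2 * ν⁻¹ * ς + α ^ 2) * (μ + ς) ^ 2) (Ici (-μ)) := by
  have hlin_nonneg : ∀ ς ∈ Ici (-μ), 0 ≤ 2 * ν⁻¹ * ς + α ^ 2 := by
    intro ς hς
    rw [show 2 * ν⁻¹ * ς + α ^ 2 = (2 * ς + ν * α ^ 2) / ν by field_simp]
    exact div_nonneg (by linarith [mem_Ici.1 hς]) hν.le
  intro a ha b hb hab
  apply mul_lt_mul'' _ _ (hlin_nonneg a ha) (sq_nonneg _)
  · gcongr
  · exact pow_lt_pow_left₀ (by linarith) (by linarith [mem_Ici.1 ha]) two_ne_zero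

theorem tendsto_cubic_atTop (hν : 0 < ν) :
    Tendsto (fun ς => (2 * ν⁻¹ * ς + α ^ 2) * (μ + ς) ^ 2) atTop atTop := by
  refine Tendsto.atTop_mul_atTop₀ ?_ ?_
  · exact tendsto_atTop_add_const_right _ _ (tendsto_id.const_mul_atTop (by positivity))
  · exact (tendsto_pow_atTop two_ne_zero).comp (tendsto_atTop_add_const_left _ _ tendsto_id)

end Cubic

theorem stmt_4_general (μ ν α τ : ℝ) (hν : 0 < ν)
    (hcase : ν * α ^ 2 > 2 * μ)
    (η : ℝ) (hη : η = (ν * α ^ 2 - 2 * μ) ^ 3 / (27 * ν))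
    (g : ℝ → ℝ) (hg : ∀ ς, g ς = (2 * ν⁻¹ * ς + α ^ 2) * (μ + ς) ^ 2)
    (hτ : τ ^ 2 > η) :
    (∃! ς : ℝ, g ς = τ ^ 2) ∧ ∀ ς : ℝ, g ς = τ ^ 2 → -μ < ς := by
  obtain rfl : g = fun ς => (2 * ν⁻¹ * ς + α ^ 2) * (μ + ς) ^ 2 := funext hg
  subst hη
  have hsol : ∀ ς, (2 * ν⁻¹ * ς + α ^ 2) * (μ + ς) ^ 2 = τ ^ 2 → -μ < ς := fun ς hς =>
    lt_of_not_ge fun hle => (cubic_le_of_le_neg hν hcase.le hle).not_gt (hς ▸ hτ)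
  have hη_pos : 0 < (ν * α ^ 2 - 2 * μ) ^ 3 / (27 * ν) := by
    have : 0 < ν * α ^ 2 - 2 * μ := by linarith
    positivity
  have hzero_lt : (2 * ν⁻¹ * -μ + α ^ 2) * (μ + -μ) ^ 2 < τ ^ 2 := by
    simpa using hη_pos.trans hτ
  obtain ⟨ς, ⟨-, hς⟩, huniq⟩ := existsUnique_mem_Ioi_of_strictMonoOn (by fun_prop)
    (strictMonoOn_cubic hν hcase.le) (tendsto_cubic_atTop hν) hzero_lt
  exact ⟨⟨ς, hς, fun ς' hς' => huniq ς' ⟨hsol ς' hς', hς'⟩⟩, hsol⟩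

theorem stmt_4 (μ ν α τ : ℝ) (hμ : 0 < μ) (hν : 0 < ν) (hα : 0 < α)
    (hcase : ν * α ^ 2 > 2 * μ)
    (η : ℝ) (hη : η = (ν * α ^ 2 - 2 * μ) ^ 3 / (27 * ν))
    (g : ℝ → ℝ) (hg : ∀ ς, g ς = (2 * ν⁻¹ * ς + α ^ 2) * (μ + ς) ^ 2)
    (hτ : τ ^ 2 > η) :
    (∃! ς : ℝ, g ς = τ ^ 2) ∧ ∀ ς : ℝ, g ς = τ ^ 2 → -μ < ς :=
  stmt_4_general μ ν α τ hν hcase η hη g hg hτ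
end

section
/- Let $\mu, \nu, \alpha > 0$ with $\nu\alpha^2 > 2\mu$, set $\eta := (\nu\alpha^2 - 2\mu)^3/(27\nu)$ and $\rho := -\tfrac{1}{3}(\mu + \nu\alpha^2)$, and define $g(\varsigma) := (2\nu^{-1}\varsigma + \alpha^2)(\mu + \varsigma)^2$. If $0 < \tau^2 \leq \eta$, then the equation $g(\varsigma) = \tau^2$ has three real solutions $\varsigma_1 \geq \varsigma_2 \geq \varsigma_3$ (counted with multiplicity) satisfying $-\tfrac{1}{2}\nu\alpha^2 \leq \varsigma_3 \leq \rho \leq \varsigma_2 \leq -\mu \leq \varsigma_1$. -/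
/-!
Since `g' ς = 6 ν⁻¹ (ς - ρ) (ς + μ)` and `ρ ≤ -μ`, the cubic `g` increases on `(-∞, ρ]`, decreases
on `[ρ, -μ]` and increases on `[-μ, ∞)`. It vanishes at `-ν α² / 2` and at `-μ`, takes its local
maximum `η` at `ρ`, and takes the value `η` again at `(ν α² - 8 μ) / 6 ≥ -μ`. So for `0 ≤ τ² ≤ η`
the intermediate value theorem gives one solution on each of the three monotone pieces, and
strict monotonicity there shows that there are no others.
-/

open Set

section CubicShape

variable {f : ℝ → ℝ} {c p q : ℝ}

theorem strictMonoOn_Iic_of_hasDerivAt_mul_sub_mul_sub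
    (hf : ∀ x, HasDerivAt f (c * (x - p) * (x - q)) x) (hc : 0 < c) (hpq : p ≤ q) :
    StrictMonoOn f (Iic p) := by
  refine strictMonoOn_of_deriv_pos (convex_Iic p)
    (fun x _ => (hf x).continuousAt.continuousWithinAt) fun x hx => ?_
  rw [interior_Iic, mem_Iio] at hx
  rw [(hf x).deriv]
  exact mul_pos_of_neg_of_neg (mul_neg_of_pos_of_neg hc (by linarith)) (by linarith)

theorem strictAntiOn_Icc_of_hasDerivAt_mul_sub_mul_sub
    (hf : ∀ x, HasDerivAt f (c * (x - p) * (x - q)) x) (hc : 0 < c) :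
    StrictAntiOn f (Icc p q) := by
  refine strictAntiOn_of_deriv_neg (convex_Icc p q)
    (fun x _ => (hf x).continuousAt.continuousWithinAt) fun x hx => ?_
  rw [interior_Icc, mem_Ioo] at hx
  rw [(hf x).deriv]
  exact mul_neg_of_pos_of_neg (mul_pos hc (by linarith)) (by linarith)

theorem strictMonoOn_Ici_of_hasDerivAt_mul_sub_mul_sub
    (hf : ∀ x, HasDerivAt f (c * (x - p) * (x - q)) x) (hc : 0 < c) (hpq : p ≤ q) :
    StrictMonoOn f (Ici q) := by
  refine strictMonoOn_of_deriv_pos (convex_Ici q)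
    (fun x _ => (hf x).continuousAt.continuousWithinAt) fun x hx => ?_
  rw [interior_Ici, mem_Ioi] at hx
  rw [(hf x).deriv]
  exact mul_pos (mul_pos hc (by linarith)) (by linarith)

theorem exists_three_preimages_of_hasDerivAt_mul_sub_mul_sub
    (hf : ∀ x, HasDerivAt f (c * (x - p) * (x - q)) x) (hc : 0 < c)
    {a b y : ℝ} (hap : a ≤ p) (hpq : p ≤ q) (hqb : q ≤ b)
    (hy₁ : y ∈ Icc (f a) (f p)) (hy₂ : y ∈ Icc (f q) (f b)) :
    ∃ x₁ x₂ x₃, f x₁ = y ∧ f x₂ = y ∧ f x₃ = y ∧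
      x₃ ∈ Icc a p ∧ x₂ ∈ Icc p q ∧ x₁ ∈ Icc q b ∧
      ∀ x, f x = y → x = x₁ ∨ x = x₂ ∨ x = x₃ := by
  have hcont : Continuous f := continuous_iff_continuousAt.2 fun x => (hf x).continuousAt
  obtain ⟨x₃, hx₃, hfx₃⟩ := intermediate_value_Icc hap hcont.continuousOn hy₁
  obtain ⟨x₂, hx₂, hfx₂⟩ :=
    intermediate_value_Icc' hpq hcont.continuousOn ⟨hy₂.1, hy₁.2⟩
  obtain ⟨x₁, hx₁, hfx₁⟩ := intermediate_value_Icc hqb hcont.continuousOn hy₂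
  refine ⟨x₁, x₂, x₃, hfx₁, hfx₂, hfx₃, hx₃, hx₂, hx₁, fun x hfx => ?_⟩
  rcases le_total x p with hxp | hpx
  · exact .inr <| .inr <| (strictMonoOn_Iic_of_hasDerivAt_mul_sub_mul_sub hf hc hpq).injOn
      hxp hx₃.2 (hfx.trans hfx₃.symm)
  rcases le_total x q with hxq | hqx
  · exact .inr <| .inl <| (strictAntiOn_Icc_of_hasDerivAt_mul_sub_mul_sub hf hc).injOn
      ⟨hpx, hxq⟩ hx₂ (hfx.trans hfx₂.symm)
  · exact .inl <| (strictMonoOn_Ici_of_hasDerivAt_mul_sub_mul_sub hf hc hpq).injOn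
      hqx hx₁.1 (hfx.trans hfx₁.symm)

end CubicShape

theorem hasDerivAt_mul_add_mul_add_sq (μ ν α x : ℝ) (hν : ν ≠ 0) :
    HasDerivAt (fun ς => (2 * ν⁻¹ * ς + α ^ 2) * (μ + ς) ^ 2)
      (6 * ν⁻¹ * (x - -(1/3) * (μ + ν * α ^ 2)) * (x - -μ)) x := by
  have hlin : HasDerivAt (fun ς => 2 * ν⁻¹ * ς + α ^ 2) (2 * ν⁻¹) x := by
    simpa using ((hasDerivAt_id x).const_mul (2 * ν⁻¹)).add_const (α ^ 2)
  have hsq : HasDerivAt (fun ς => (μ + ς) ^ 2) (2 * (μ + x)) x := by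
    simpa using ((hasDerivAt_id x).const_add μ).fun_pow 2
  refine (hlin.mul hsq).congr_deriv ?_
  field_simp
  ring

theorem stmt_5_general (μ ν α τ : ℝ) (hν : 0 < ν)
    (hcase : ν * α ^ 2 > 2 * μ)
    (η ρ : ℝ) (hη : η = (ν * α ^ 2 - 2 * μ) ^ 3 / (27 * ν))
    (hρ : ρ = -(1/3) * (μ + ν * α ^ 2))
    (g : ℝ → ℝ) (hg : ∀ ς, g ς = (2 * ν⁻¹ * ς + α ^ 2) * (μ + ς) ^ 2)
    (hτη : τ ^ 2 ≤ η) :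
    ∃ ς₁ ς₂ ς₃ : ℝ, g ς₁ = τ ^ 2 ∧ g ς₂ = τ ^ 2 ∧ g ς₃ = τ ^ 2 ∧
      ς₃ ≤ ς₂ ∧ ς₂ ≤ ς₁ ∧
      -(1/2) * ν * α ^ 2 ≤ ς₃ ∧ ς₃ ≤ ρ ∧ ρ ≤ ς₂ ∧ ς₂ ≤ -μ ∧ -μ ≤ ς₁ ∧
      (∀ ς : ℝ, g ς = τ ^ 2 → ς = ς₁ ∨ ς = ς₂ ∨ ς = ς₃) := by
  have hν₀ : ν ≠ 0 := hν.ne'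
  have hderiv : ∀ x, HasDerivAt g (6 * ν⁻¹ * (x - ρ) * (x - -μ)) x := by
    rw [funext hg, hρ]
    exact (hasDerivAt_mul_add_mul_add_sq μ ν α · hν₀)
  have hleft : g (-(1/2) * ν * α ^ 2) = 0 := by rw [hg]; field_simp; ring
  have hmax : g ρ = η := by rw [hg, hρ, hη]; field_simp; ring
  have hmin : g (-μ) = 0 := by rw [hg]; ring
  have hright : g ((ν * α ^ 2 - 8 * μ) / 6) = η := by rw [hg, hη]; field_simp; ring
  obtain ⟨ς₁, ς₂, ς₃, h₁, h₂, h₃, ⟨h₃a, h₃ρ⟩, ⟨h₂ρ, h₂μ⟩, ⟨h₁μ, -⟩, hall⟩ :=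
    exists_three_preimages_of_hasDerivAt_mul_sub_mul_sub hderiv (by positivity)
      (a := -(1/2) * ν * α ^ 2) (b := (ν * α ^ 2 - 8 * μ) / 6) (y := τ ^ 2)
      (by rw [hρ]; linarith) (by rw [hρ]; linarith) (by linarith)
      (by rw [hleft, hmax]; exact ⟨sq_nonneg τ, hτη⟩)
      (by rw [hmin, hright]; exact ⟨sq_nonneg τ, hτη⟩)
  exact ⟨ς₁, ς₂, ς₃, h₁, h₂, h₃, h₃ρ.trans h₂ρ, h₂μ.trans h₁μ, h₃a, h₃ρ, h₂ρ, h₂μ, h₁μ, hall⟩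

theorem stmt_5 (μ ν α τ : ℝ) (hμ : 0 < μ) (hν : 0 < ν) (hα : 0 < α)
    (hcase : ν * α ^ 2 > 2 * μ)
    (η ρ : ℝ) (hη : η = (ν * α ^ 2 - 2 * μ) ^ 3 / (27 * ν))
    (hρ : ρ = -(1/3) * (μ + ν * α ^ 2))
    (g : ℝ → ℝ) (hg : ∀ ς, g ς = (2 * ν⁻¹ * ς + α ^ 2) * (μ + ς) ^ 2)
    (hτ0 : 0 < τ ^ 2) (hτη : τ ^ 2 ≤ η) :
    ∃ ς₁ ς₂ ς₃ : ℝ, g ς₁ = τ ^ 2 ∧ g ς₂ = τ ^ 2 ∧ g ς₃ = τ ^ 2 ∧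
      ς₃ ≤ ς₂ ∧ ς₂ ≤ ς₁ ∧
      -(1/2) * ν * α ^ 2 ≤ ς₃ ∧ ς₃ ≤ ρ ∧ ρ ≤ ς₂ ∧ ς₂ ≤ -μ ∧ -μ ≤ ς₁ ∧
      (∀ ς : ℝ, g ς = τ ^ 2 → ς = ς₁ ∨ ς = ς₂ ∨ ς = ς₃) :=
  stmt_5_general μ ν α τ hν hcase η ρ hη hρ g hg hτη
end

section
/- Let $\mu, \nu, \alpha > 0$ with $\nu\alpha^2 > 2\mu$ and $\tau \in \mathbb{R}$ with $\tau^2 > \eta := (\nu\alpha^2-2\mu)^3/(27\nu)$. Let $\varsigma_1 > -\mu$ be the unique real solution of $(2\nu^{-1}\varsigma + \alpha^2)(\mu+\varsigma)^2 = \tau^2$. Define $h_\tau(\varsigma) := -\tfrac{1}{2}\big[\tau^2/(\varsigma+\mu) + 2\alpha\tau + \alpha^2(\varsigma+\mu) + \nu^{-1}\varsigma^2\big]$. Then $h_\tau(\varsigma) \leq h_\tau(\varsigma_1)$ for all $\varsigma > -\mu$, i.e., $\varsigma_1$ is the global maximizer of $h_\tau$ on $(-\mu, \infty)$. -/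
/-! Writing `g ς := τ² / (ς + μ) + α² (ς + μ) + ν⁻¹ ς²`, so that `h = -(g + 2ατ) / 2`, the cubic
equation for `ς₁` is `g'(ς₁) = 0`, and substituting `τ² = (2ν⁻¹ς₁ + α²)(μ + ς₁)²` gives the exact
factorisation `g ς - g ς₁ = (ς - ς₁)² (να² + ς + μ + 2ς₁) / (ν (ς + μ))`. The last factor is positive
because the cubic forces `2ν⁻¹ς₁ + α² = τ² / (μ + ς₁)² ≥ 0`. -/

section CriticalPoint

variable {μ ν α τ ς ς₁ : ℝ}

lemma nonneg_of_critical_point (hν : 0 < ν) (hς₁ : ς₁ > -μ)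
    (hsol : (2 * ν⁻¹ * ς₁ + α ^ 2) * (μ + ς₁) ^ 2 = τ ^ 2) :
    0 ≤ ν * α ^ 2 + 2 * ς₁ := by
  have hsq : 0 < (μ + ς₁) ^ 2 := pow_pos (by linarith) 2
  have hfactor : 0 ≤ 2 * ν⁻¹ * ς₁ + α ^ 2 :=
    nonneg_of_mul_nonneg_left (hsol ▸ sq_nonneg τ) hsq
  have hν_mul : ν * (2 * ν⁻¹ * ς₁ + α ^ 2) = ν * α ^ 2 + 2 * ς₁ := by
    field_simp
    ring
  rw [← hν_mul]
  positivity

lemma sub_eq_of_critical_point (hν : ν ≠ 0) (hς : ς + μ ≠ 0) (hς₁ : ς₁ + μ ≠ 0)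
    (hsol : (2 * ν⁻¹ * ς₁ + α ^ 2) * (μ + ς₁) ^ 2 = τ ^ 2) :
    (τ ^ 2 / (ς + μ) + α ^ 2 * (ς + μ) + ν⁻¹ * ς ^ 2)
        - (τ ^ 2 / (ς₁ + μ) + α ^ 2 * (ς₁ + μ) + ν⁻¹ * ς₁ ^ 2)
      = (ς - ς₁) ^ 2 * (ν * α ^ 2 + ς + μ + 2 * ς₁) / (ν * (ς + μ)) := by
  rw [← hsol]
  field_simp
  ring

lemma le_of_critical_point (hν : 0 < ν) (hς : ς > -μ) (hς₁ : ς₁ > -μ)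
    (hsol : (2 * ν⁻¹ * ς₁ + α ^ 2) * (μ + ς₁) ^ 2 = τ ^ 2) :
    τ ^ 2 / (ς₁ + μ) + α ^ 2 * (ς₁ + μ) + ν⁻¹ * ς₁ ^ 2
      ≤ τ ^ 2 / (ς + μ) + α ^ 2 * (ς + μ) + ν⁻¹ * ς ^ 2 := by
  have hpos : 0 < ς + μ := by linarith
  have hpos₁ : 0 < ς₁ + μ := by linarith
  have hlin : 0 ≤ ν * α ^ 2 + ς + μ + 2 * ς₁ := by
    linarith [nonneg_of_critical_point hν hς₁ hsol]
  rw [← sub_nonneg, sub_eq_of_critical_point hν.ne' hpos.ne' hpos₁.ne' hsol]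
  positivity

end CriticalPoint

theorem stmt_8_general (μ ν α τ : ℝ) (hν : 0 < ν)
    (ς₁ : ℝ) (hς₁ : ς₁ > -μ)
    (hsol : (2 * ν⁻¹ * ς₁ + α ^ 2) * (μ + ς₁) ^ 2 = τ ^ 2)
    (h : ℝ → ℝ)
    (hh : ∀ ς : ℝ, h ς =
      -(1/2) * (τ ^ 2 / (ς + μ) + 2 * α * τ + α ^ 2 * (ς + μ) + ν⁻¹ * ς ^ 2)) :
    ∀ ς : ℝ, ς > -μ → h ς ≤ h ς₁ := by
  intro ς hς
  rw [hh, hh]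
  linarith [le_of_critical_point (α := α) hν hς hς₁ hsol]

theorem stmt_8 (μ ν α τ : ℝ) (hμ : 0 < μ) (hν : 0 < ν) (hα : 0 < α)
    (hcase : ν * α ^ 2 > 2 * μ)
    (η : ℝ) (hη : η = (ν * α ^ 2 - 2 * μ) ^ 3 / (27 * ν)) (hτ : τ ^ 2 > η)
    (ς₁ : ℝ) (hς₁ : ς₁ > -μ)
    (hsol : (2 * ν⁻¹ * ς₁ + α ^ 2) * (μ + ς₁) ^ 2 = τ ^ 2)
    (h : ℝ → ℝ)
    (hh : ∀ ς : ℝ, h ς =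
      -(1/2) * (τ ^ 2 / (ς + μ) + 2 * α * τ + α ^ 2 * (ς + μ) + ν⁻¹ * ς ^ 2)) :
    ∀ ς : ℝ, ς > -μ → h ς ≤ h ς₁ :=
  stmt_8_general μ ν α τ hν ς₁ hς₁ hsol h hh
end

section
/- Let $\mu, \nu, \alpha > 0$ with $\nu\alpha^2 > 2\mu$, $\eta := (\nu\alpha^2-2\mu)^3/(27\nu)$, and $\tau \in \mathbb{R}$ with $0 < \tau^2 \leq \eta$. Let $\varsigma_3 \leq \varsigma_2 \leq -\mu$ be the two solutions of $(2\nu^{-1}\varsigma + \alpha^2)(\mu+\varsigma)^2 = \tau^2$ in $[-\tfrac{1}{2}\nu\alpha^2, -\mu]$ with $\varsigma_3 \leq \rho \leq \varsigma_2$ where $\rho := -\tfrac{1}{3}(\mu+\nu\alpha^2)$. Define $h_\tau(\varsigma) := -\tfrac{1}{2}\big[\tau^2/(\varsigma+\mu) + 2\alpha\tau + \alpha^2(\varsigma+\mu) + \nu^{-1}\varsigma^2\big]$. Then $h_\tau(\varsigma_2) \leq h_\tau(\varsigma)$ for all $\varsigma \in [\varsigma_3, -\mu)$, i.e., $\varsigma_2$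 minimizes $h_\tau$ on $[\varsigma_3, -\mu)$. -/
/-!
Up to the factor `ν`, the stationarity equation of `h_τ` is `g(ς) = ν τ²` for the cubic
`g(ς) = (2ς + να²)(μ + ς)²`, whose critical points are `ρ` (local maximum) and `-μ`. Multiplying
`h_τ(ς₂) ≤ h_τ(ς)` by `ν (ς + μ) < 0` and using `g(ς₂) = ντ²` turns it into
`(ς - ς₂)² (ς + μ + να² + 2ς₂) ≥ 0`, so it suffices that `ς₃ + 2ς₂ + μ + να² ≥ 0`, i.e.
`ς₂ + ς₃ ≥ 2ρ`. This holds because `g(ρ + t) - g(ρ - t) = 4t³`: the reflection `2ρ - ς₃` of `ς₃`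
in `ρ` satisfies `g(2ρ - ς₃) ≥ g(ς₃) = g(ς₂)`, and `g` decreases on `[ρ, -μ]`.
-/

/-- `ν` times the stationarity equation of `h_τ`, with `c = να²`, reads `critCubic μ c ς = ντ²`. -/
def critCubic (μ c s : ℝ) : ℝ := (2 * s + c) * (μ + s) ^ 2

/-- `ν (h_τ(ς) + ατ) = -scaledObjective μ (να²) (ντ²) ς / 2`. -/
noncomputable def scaledObjective (μ c κ s : ℝ) : ℝ := κ / (s + μ) + c * (s + μ) + s ^ 2

theorem critCubic_reflect (μ c s : ℝ) :
    critCubic μ c (2 * (-(1/3) * (μ + c)) - s) =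
      critCubic μ c s + 4 * (-(1/3) * (μ + c) - s) ^ 3 := by
  unfold critCubic
  ring

theorem critCubic_strictAntiOn (μ c : ℝ) :
    StrictAntiOn (critCubic μ c) (Set.Icc (-(1/3) * (μ + c)) (-μ)) := by
  rintro x ⟨hρx, hxμ⟩ y ⟨hρy, hyμ⟩ hxy
  -- the difference quotient is the mean of `g'` at the endpoints minus `(y - x)²`
  have hdiff : critCubic μ c y - critCubic μ c x =
      (y - x) * ((2 * (x + μ) * (3 * x + μ + c) + 2 * (y + μ) * (3 * y + μ + c)) / 2
        - (y - x) ^ 2) := by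
    unfold critCubic
    ring
  have hx' : 2 * (x + μ) * (3 * x + μ + c) ≤ 0 :=
    mul_nonpos_of_nonpos_of_nonneg (by linarith) (by linarith)
  have hy' : 2 * (y + μ) * (3 * y + μ + c) ≤ 0 :=
    mul_nonpos_of_nonpos_of_nonneg (by linarith) (by linarith)
  have hyx : 0 < y - x := sub_pos.2 hxy
  nlinarith [mul_pos hyx (pow_pos hyx 2)]

theorem two_mul_le_add_of_critCubic_eq {μ c s₂ s₃ : ℝ} (hc : 2 * μ ≤ c)
    (hs₃ : -(1/2) * c ≤ s₃) (hρs₂ : -(1/3) * (μ + c) ≤ s₂) (hs₂ : s₂ ≤ -μ)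
    (heq : critCubic μ c s₂ = critCubic μ c s₃) :
    2 * (-(1/3) * (μ + c)) ≤ s₂ + s₃ := by
  have hreflμ : 2 * (-(1/3) * (μ + c)) - s₃ ≤ -μ := by linarith
  set ρ := -(1/3) * (μ + c)
  by_contra! hlt
  have hρs₃ : 0 ≤ ρ - s₃ := by linarith
  have hmem : 2 * ρ - s₃ ∈ Set.Icc ρ (-μ) := ⟨by linarith, hreflμ⟩
  have hdec := critCubic_strictAntiOn μ c ⟨hρs₂, hs₂⟩ hmem (by linarith)
  have hrefl : critCubic μ c (2 * ρ - s₃) = critCubic μ c s₃ + 4 * (ρ - s₃) ^ 3 :=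
    critCubic_reflect μ c s₃
  linarith [pow_nonneg hρs₃ 3]

theorem scaledObjective_le_of_critCubic_eq {μ c κ s s₂ : ℝ} (hκ : κ = critCubic μ c s₂)
    (hs₂ : s₂ + μ < 0) (hs : s + μ < 0) (hpos : 0 ≤ s + μ + c + 2 * s₂) :
    scaledObjective μ c κ s ≤ scaledObjective μ c κ s₂ := by
  have hdiff : scaledObjective μ c κ s₂ - scaledObjective μ c κ s =
      (s - s₂) ^ 2 * (s + μ + c + 2 * s₂) / -(s + μ) := by
    unfold scaledObjective critCubic at *
    subst hκ
    field_simp [hs₂.ne, hs.ne]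
    ring
  have : 0 ≤ (s - s₂) ^ 2 * (s + μ + c + 2 * s₂) / -(s + μ) :=
    div_nonneg (mul_nonneg (sq_nonneg _) hpos) (by linarith)
  linarith

theorem critCubic_eq_of_stationary {μ ν α τ s : ℝ} (hν : ν ≠ 0)
    (h : (2 * ν⁻¹ * s + α ^ 2) * (μ + s) ^ 2 = τ ^ 2) :
    critCubic μ (ν * α ^ 2) s = ν * τ ^ 2 := by
  rw [← h, critCubic]
  field_simp

theorem stmt_9_general (μ ν α τ : ℝ) (hν : 0 < ν)
    (hcase : ν * α ^ 2 > 2 * μ)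
    (ρ : ℝ)
    (hρ : ρ = -(1/3) * (μ + ν * α ^ 2))
    (hτ0 : 0 < τ ^ 2)
    (ς₂ ς₃ : ℝ) (hς₂ : ς₂ ≤ -μ)
    (hmem₃ : -(1/2) * ν * α ^ 2 ≤ ς₃) (hρ₂ : ρ ≤ ς₂)
    (hsol₂ : (2 * ν⁻¹ * ς₂ + α ^ 2) * (μ + ς₂) ^ 2 = τ ^ 2)
    (hsol₃ : (2 * ν⁻¹ * ς₃ + α ^ 2) * (μ + ς₃) ^ 2 = τ ^ 2)
    (h : ℝ → ℝ)
    (hh : ∀ ς : ℝ, h ς =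
      -(1/2) * (τ ^ 2 / (ς + μ) + 2 * α * τ + α ^ 2 * (ς + μ) + ν⁻¹ * ς ^ 2)) :
    ∀ ς : ℝ, ς₃ ≤ ς → ς < -μ → h ς₂ ≤ h ς := by
  subst hρ
  have hg₂ := critCubic_eq_of_stationary hν.ne' hsol₂
  have hg₃ := critCubic_eq_of_stationary hν.ne' hsol₃
  have hς₂' : ς₂ < -μ := by
    refine lt_of_le_of_ne hς₂ fun heq => ?_
    rw [heq, critCubic] at hg₂
    nlinarith
  have hsum := two_mul_le_add_of_critCubic_eq hcase.le (by linarith) hρ₂ hς₂ (hg₂.trans hg₃.symm)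
  have hobj : ∀ ς, h ς = -(α * τ) - scaledObjective μ (ν * α ^ 2) (ν * τ ^ 2) ς / (2 * ν) := by
    intro ς
    rw [hh, scaledObjective, mul_div_assoc]
    generalize τ ^ 2 / (ς + μ) = u
    field_simp
    ring
  intro ς hς₃ hςμ
  rw [hobj, hobj]
  gcongr
  exact scaledObjective_le_of_critCubic_eq hg₂.symm (by linarith) (by linarith) (by linarith)

theorem stmt_9 (μ ν α τ : ℝ) (hμ : 0 < μ) (hν : 0 < ν) (hα : 0 < α)
    (hcase : ν * α ^ 2 > 2 * μ)
    (η ρ : ℝ) (hη : η = (ν * α ^ 2 - 2 * μ) ^ 3 / (27 * ν))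
    (hρ : ρ = -(1/3) * (μ + ν * α ^ 2))
    (hτ0 : 0 < τ ^ 2) (hτη : τ ^ 2 ≤ η)
    (ς₂ ς₃ : ℝ) (hord : ς₃ ≤ ς₂) (hς₂ : ς₂ ≤ -μ)
    (hmem₃ : -(1/2) * ν * α ^ 2 ≤ ς₃) (hρ₃ : ς₃ ≤ ρ) (hρ₂ : ρ ≤ ς₂)
    (hsol₂ : (2 * ν⁻¹ * ς₂ + α ^ 2) * (μ + ς₂) ^ 2 = τ ^ 2)
    (hsol₃ : (2 * ν⁻¹ * ς₃ + α ^ 2) * (μ + ς₃) ^ 2 = τ ^ 2)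
    (h : ℝ → ℝ)
    (hh : ∀ ς : ℝ, h ς =
      -(1/2) * (τ ^ 2 / (ς + μ) + 2 * α * τ + α ^ 2 * (ς + μ) + ν⁻¹ * ς ^ 2)) :
    ∀ ς : ℝ, ς₃ ≤ ς → ς < -μ → h ς₂ ≤ h ς :=
  stmt_9_general μ ν α τ hν hcase ρ hρ hτ0 ς₂ ς₃ hς₂ hmem₃ hρ₂ hsol₂ hsol₃ h hh
end

section
/- Let $\mu, \nu, \alpha > 0$ with $\nu\alpha^2 > 2\mu$, $\eta := (\nu\alpha^2-2\mu)^3/(27\nu)$, and $\tau \in \mathbb{R}$ with $0 < \tau^2 \leq \eta$. Let $\varsigma_3$ be the solution of $(2\nu^{-1}\varsigma + \alpha^2)(\mu+\varsigma)^2 = \tau^2$ in $[-\tfrac{1}{2}\nu\alpha^2, \rho]$ where $\rho := -\tfrac{1}{3}(\mu+\nu\alpha^2)$, and $\varsigma_2$ the solution in $[\rho,-\mu]$. Define $h_\tau(\varsigma) := -\tfrac{1}{2}\big[\tau^2/(\varsigma+\mu) + 2\alpha\tau + \alpha^2(\varsigma+\mu) + \nu^{-1}\varsigma^2\big]$. Then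 $h_\tau(\varsigma) \leq h_\tau(\varsigma_3)$ for all $\varsigma \in [-\tfrac{1}{2}\nu\alpha^2, \varsigma_2]$, i.e., $\varsigma_3$ maximizes $h_\tau$ on $[-\tfrac{1}{2}\nu\alpha^2, \varsigma_2]$. -/
/-!
Both `ς₂` and `ς₃` are critical points of `h_τ`: multiplied by `ν`, the stationarity equation reads
`g(ς) = ν τ²` for the cubic `g(ς) = (2ς + να²)(μ + ς)²`, which increases up to `ρ` and decreases on
`[ρ, -μ]`. Substituting `τ² = g(ς₃)/ν` gives
`h_τ(ς₃) - h_τ(ς) = (ς - ς₃)² (ς + μ + να² + 2ς₃) / (2ν(ς + μ))`,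
so it suffices that `ς₂ + 2ς₃ + μ + να² ≤ 0`. Since
`g(ς) - g(-(μ + να² + 2ς)) = (2ς + να²)(3ς + μ + να²)²`, the reflected point `-(μ + να² + 2ς₃) ≥ ρ`
has `g`-value at most `g(ς₃) = g(ς₂)`, and monotonicity of `g` on `[ρ, -μ]` places `ς₂` to its left.
-/

open Set

def stationarityCubic (μ a x : ℝ) : ℝ := (2 * x + a) * (μ + x) ^ 2

section StationarityCubic

variable (μ a : ℝ)

theorem hasDerivAt_stationarityCubic (x : ℝ) :
    HasDerivAt (stationarityCubic μ a) (2 * (μ + x) * (3 * x + μ + a)) x := by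
  have hlin : HasDerivAt (fun x : ℝ => 2 * x + a) 2 x := by
    simpa using ((hasDerivAt_id x).const_mul 2).add_const a
  have hsq : HasDerivAt (fun x : ℝ => (μ + x) ^ 2) (2 * (μ + x)) x := by
    simpa using ((hasDerivAt_id' x).const_add μ).fun_pow 2
  exact (hlin.mul hsq).congr_deriv (by ring)

theorem stationarityCubic_strictAntiOn :
    StrictAntiOn (stationarityCubic μ a) (Icc (-(μ + a) / 3) (-μ)) := by
  refine strictAntiOn_of_deriv_neg (convex_Icc _ _)
    (fun x _ => (hasDerivAt_stationarityCubic μ a x).continuousAt.continuousWithinAt) ?_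
  intro x hx
  rw [interior_Icc] at hx
  rw [(hasDerivAt_stationarityCubic μ a x).deriv]
  have h₁ : μ + x < 0 := by linarith [hx.2]
  have h₂ : 0 < 3 * x + μ + a := by linarith [hx.1]
  nlinarith [mul_neg_of_neg_of_pos h₁ h₂]

theorem stationarityCubic_reflect_le {y : ℝ} (hy : 0 ≤ 2 * y + a) :
    stationarityCubic μ a (-(μ + a + 2 * y)) ≤ stationarityCubic μ a y := by
  have hdiff : stationarityCubic μ a y - stationarityCubic μ a (-(μ + a + 2 * y))
      = (2 * y + a) * (3 * y + μ + a) ^ 2 := by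
    unfold stationarityCubic; ring
  linarith [mul_nonneg hy (sq_nonneg (3 * y + μ + a))]

theorem le_reflect_of_stationarityCubic_eq {x y : ℝ} (hx : x ∈ Icc (-(μ + a) / 3) (-μ))
    (hy : y ≤ -(μ + a) / 3) (hxy : stationarityCubic μ a x = stationarityCubic μ a y) :
    x ≤ -(μ + a + 2 * y) := by
  by_contra! hlt
  have hr : -(μ + a + 2 * y) ∈ Icc (-(μ + a) / 3) (-μ) :=
    ⟨by linarith, by linarith [hx.2]⟩
  have hgt := stationarityCubic_strictAntiOn μ a hr hx hlt
  have hle := stationarityCubic_reflect_le μ a (y := y) (by linarith [hx.2])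
  linarith

end StationarityCubic

noncomputable def objective (μ ν α τ ς : ℝ) : ℝ :=
  -(1/2) * (τ ^ 2 / (ς + μ) + 2 * α * τ + α ^ 2 * (ς + μ) + ν⁻¹ * ς ^ 2)

section Objective

variable {μ ν α τ ς ς₀ : ℝ}

theorem objective_sub_objective (hν : ν ≠ 0) (hς : ς + μ ≠ 0) (hς₀ : ς₀ + μ ≠ 0)
    (hcrit : (2 * ν⁻¹ * ς₀ + α ^ 2) * (μ + ς₀) ^ 2 = τ ^ 2) :
    objective μ ν α τ ς₀ - objective μ ν α τ ς
      = (ς - ς₀) ^ 2 * (ς + μ + ν * α ^ 2 + 2 * ς₀) / (2 * ν * (ς + μ)) := by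
  unfold objective
  rw [← hcrit]
  field_simp
  ring

theorem objective_le_objective (hν : 0 < ν) (hς : ς + μ < 0) (hς₀ : ς₀ + μ ≠ 0)
    (hcrit : (2 * ν⁻¹ * ς₀ + α ^ 2) * (μ + ς₀) ^ 2 = τ ^ 2)
    (hleft : ς + μ + ν * α ^ 2 + 2 * ς₀ ≤ 0) :
    objective μ ν α τ ς ≤ objective μ ν α τ ς₀ := by
  have hdiff := objective_sub_objective hν.ne' hς.ne hς₀ hcrit
  have hnum : (ς - ς₀) ^ 2 * (ς + μ + ν * α ^ 2 + 2 * ς₀) ≤ 0 :=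
    mul_nonpos_of_nonneg_of_nonpos (sq_nonneg _) hleft
  have hden : 2 * ν * (ς + μ) < 0 := mul_neg_of_pos_of_neg (by positivity) hς
  linarith [div_nonneg_of_nonpos hnum hden.le]

end Objective

theorem stmt_10_general (μ ν α τ : ℝ) (hν : 0 < ν)
    (hcase : ν * α ^ 2 > 2 * μ)
    (ρ : ℝ)
    (hρ : ρ = -(1/3) * (μ + ν * α ^ 2))
    (hτ0 : 0 < τ ^ 2)
    (ς₂ ς₃ : ℝ)
    (hρ₃ : ς₃ ≤ ρ)
    (hρ₂ : ρ ≤ ς₂) (hς₂ : ς₂ ≤ -μ)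
    (hsol₂ : (2 * ν⁻¹ * ς₂ + α ^ 2) * (μ + ς₂) ^ 2 = τ ^ 2)
    (hsol₃ : (2 * ν⁻¹ * ς₃ + α ^ 2) * (μ + ς₃) ^ 2 = τ ^ 2)
    (h : ℝ → ℝ)
    (hh : ∀ ς : ℝ, h ς =
      -(1/2) * (τ ^ 2 / (ς + μ) + 2 * α * τ + α ^ 2 * (ς + μ) + ν⁻¹ * ς ^ 2)) :
    ∀ ς : ℝ, -(1/2) * ν * α ^ 2 ≤ ς → ς ≤ ς₂ → h ς ≤ h ς₃ := by
  have hcubic : ∀ ς,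
      (2 * ν⁻¹ * ς + α ^ 2) * (μ + ς) ^ 2 = ν⁻¹ * stationarityCubic μ (ν * α ^ 2) ς :=
    fun ς => by unfold stationarityCubic; field_simp
  have hρ' : ρ = -(μ + ν * α ^ 2) / 3 := by rw [hρ]; ring
  have hg : stationarityCubic μ (ν * α ^ 2) ς₂ = stationarityCubic μ (ν * α ^ 2) ς₃ := by
    rw [hcubic] at hsol₂ hsol₃
    exact (mul_right_inj' (inv_ne_zero hν.ne')).mp (hsol₂.trans hsol₃.symm)
  have hς₂μ : ς₂ ≠ -μ := by
    rintro rfl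
    rw [add_neg_cancel, zero_pow two_ne_zero, mul_zero] at hsol₂
    exact hτ0.ne hsol₂
  have hς₃μ : ς₃ + μ < 0 := by linarith
  have hreflect : ς₂ ≤ -(μ + ν * α ^ 2 + 2 * ς₃) :=
    le_reflect_of_stationarityCubic_eq μ (ν * α ^ 2) ⟨hρ' ▸ hρ₂, hς₂⟩ (hρ' ▸ hρ₃) hg
  intro ς _ hς
  rw [hh, hh]
  exact objective_le_objective hν (by linarith [lt_of_le_of_ne hς₂ hς₂μ]) hς₃μ.ne hsol₃
    (by linarith)

theorem stmt_10 (μ ν α τ : ℝ) (hμ : 0 < μ) (hν : 0 < ν) (hα : 0 < α)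
    (hcase : ν * α ^ 2 > 2 * μ)
    (η ρ : ℝ) (hη : η = (ν * α ^ 2 - 2 * μ) ^ 3 / (27 * ν))
    (hρ : ρ = -(1/3) * (μ + ν * α ^ 2))
    (hτ0 : 0 < τ ^ 2) (hτη : τ ^ 2 ≤ η)
    (ς₂ ς₃ : ℝ)
    (hmem₃ : -(1/2) * ν * α ^ 2 ≤ ς₃) (hρ₃ : ς₃ ≤ ρ)
    (hρ₂ : ρ ≤ ς₂) (hς₂ : ς₂ ≤ -μ)
    (hsol₂ : (2 * ν⁻¹ * ς₂ + α ^ 2) * (μ + ς₂) ^ 2 = τ ^ 2)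
    (hsol₃ : (2 * ν⁻¹ * ς₃ + α ^ 2) * (μ + ς₃) ^ 2 = τ ^ 2)
    (h : ℝ → ℝ)
    (hh : ∀ ς : ℝ, h ς =
      -(1/2) * (τ ^ 2 / (ς + μ) + 2 * α * τ + α ^ 2 * (ς + μ) + ν⁻¹ * ς ^ 2)) :
    ∀ ς : ℝ, -(1/2) * ν * α ^ 2 ≤ ς → ς ≤ ς₂ → h ς ≤ h ς₃ :=
  stmt_10_general μ ν α τ hν hcase ρ hρ hτ0 ς₂ ς₃ hρ₃ hρ₂ hς₂ hsol₂ hsol₃ h hh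
end

section
/- Let $\mu, \nu, \alpha \in \mathbb{R}$ with $\mu, \nu > 0$ and $\nu\alpha^2 > 2\mu$, and let $\beta \in \mathbb{R}$ with $\beta^2 = \eta := (\nu\alpha^2 - 2\mu)^3/(27\nu)$ and $\beta \neq 0$. Set $\rho := -\tfrac{1}{3}(\mu + \nu\alpha^2)$ and define $p(y) := \tfrac{1}{2}\mu y^2 + \tfrac{1}{2}\nu(\tfrac{1}{2}y^2 - \alpha y)^2 - (\alpha\mu + \beta)y$. Then $v_0 := \alpha + \beta/(\rho + \mu)$ satisfies $p'(v_0) = 0$, $p''(v_0) = 0$, and $p'''(v_0) = 3\nu\beta/(\rho + \mu) \neq 0$; consequently $v_0$ is neither a local minimum nor a local maximum of $p$. -/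
/-!
Put `t = β / (ρ + μ)`, so that `v₀ = α + t`. Since `ρ + μ = (2μ - να²)/3`, the relation
`β² = η` says exactly `ν t² = -(ρ + μ)`, and with it the Taylor expansion of the quartic `p`
at `v₀` collapses to `p (v₀ + h) = p v₀ + h³ (ν t / 2 + ν h / 8)`. The cubic coefficient is
nonzero, so `p - p v₀` changes sign at `v₀`, and the first three derivatives are read off.
-/

open Topology

section CubicExpansion

variable {f : ℝ → ℝ} {x c d : ℝ}

theorem not_isLocalMin_of_cubic_expansion (hc : c ≠ 0)
    (hf : ∀ h, f (x + h) = f x + h ^ 3 * (c + d * h)) : ¬ IsLocalMin f x := by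
  intro hmin
  have hsign : ∀ᶠ y in 𝓝 x, 0 < c * (c + d * (y - x)) := by
    have hcont : Continuous fun y => c * (c + d * (y - x)) := by fun_prop
    exact (hcont.tendsto x).eventually_const_lt (by simpa using mul_self_pos.mpr hc)
  obtain ⟨ε, hε, hball⟩ := Metric.eventually_nhds_iff.mp (hmin.and hsign)
  obtain ⟨s, hs, hsε⟩ : ∃ s, 0 < s ∧ s < ε := ⟨ε / 2, half_pos hε, half_lt_self hε⟩
  obtain ⟨hr, hr'⟩ := hball (y := x + s) (by simpa [abs_of_pos hs])
  obtain ⟨hl, hl'⟩ := hball (y := x + -s) (by simpa [abs_of_pos hs])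
  rw [hf] at hr hl
  simp only [add_sub_cancel_left] at hr' hl'
  have hright : 0 ≤ c + d * s := by nlinarith [pow_pos hs 3]
  have hleft : c + d * -s ≤ 0 := by nlinarith [pow_pos hs 3]
  have hcpos : 0 < c := by nlinarith
  nlinarith

theorem not_isLocalMax_of_cubic_expansion (hc : c ≠ 0)
    (hf : ∀ h, f (x + h) = f x + h ^ 3 * (c + d * h)) : ¬ IsLocalMax f x := fun hmax =>
  not_isLocalMin_of_cubic_expansion (f := fun y => -f y) (d := -d) (neg_ne_zero.mpr hc)
    (fun h => by rw [hf h]; ring) hmax.neg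

theorem iteratedDeriv_eq_of_cubic_expansion
    (hf : ∀ h, f (x + h) = f x + h ^ 3 * (c + d * h)) (n : ℕ) :
    iteratedDeriv n f x = iteratedDeriv n (fun _ => f x) (0 : ℝ)
      + c * iteratedDeriv n (· ^ 3) (0 : ℝ) + d * iteratedDeriv n (· ^ 4) (0 : ℝ) := by
  have hshift : (fun h => f (x + h)) = fun h => f x + c * h ^ 3 + d * h ^ 4 := by
    funext h; rw [hf h]; ring
  have hcomp := congrFun (iteratedDeriv_comp_const_add n f x) 0
  rw [add_zero, hshift] at hcomp
  rw [← hcomp, iteratedDeriv_fun_add (by fun_prop) (by fun_prop),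
    iteratedDeriv_fun_add (by fun_prop) (by fun_prop),
    iteratedDeriv_const_mul _ (by fun_prop), iteratedDeriv_const_mul _ (by fun_prop)]

theorem deriv_iteratedDeriv_of_cubic_expansion
    (hf : ∀ h, f (x + h) = f x + h ^ 3 * (c + d * h)) :
    deriv f x = 0 ∧ iteratedDeriv 2 f x = 0 ∧ iteratedDeriv 3 f x = 6 * c := by
  simp only [← iteratedDeriv_one, iteratedDeriv_eq_of_cubic_expansion hf,
    iteratedDeriv_fun_pow_zero, iteratedDeriv_const]
  norm_num [Nat.factorial, mul_comm]

end CubicExpansion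

theorem quartic_cubic_expansion {μ ν α β ρ t : ℝ} {p : ℝ → ℝ}
    (hp : ∀ y : ℝ, p y = (1/2) * μ * y ^ 2
      + (1/2) * ν * ((1/2) * y ^ 2 - α * y) ^ 2 - (α * μ + β) * y)
    (hρ : ρ = -(1/3) * (μ + ν * α ^ 2)) (hβ : β = t * (ρ + μ)) (ht : ν * t ^ 2 = -(ρ + μ))
    (h : ℝ) : p (α + t + h) = p (α + t) + h ^ 3 * (ν * t / 2 + ν / 8 * h) := by
  rw [hp, hp, hβ]
  linear_combination (h * t / 2 + 3 * h ^ 2 / 4) * ht - (3 * t * h / 2 + 3 * h ^ 2 / 4) * hρ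

theorem stmt_14_general (μ ν α β : ℝ) (hν : 0 < ν)
    (hcase : ν * α ^ 2 > 2 * μ)
    (η ρ : ℝ) (hη : η = (ν * α ^ 2 - 2 * μ) ^ 3 / (27 * ν))
    (hρ : ρ = -(1/3) * (μ + ν * α ^ 2))
    (hβ : β ^ 2 = η) (hβ0 : β ≠ 0)
    (p : ℝ → ℝ)
    (hp : ∀ y : ℝ, p y = (1/2) * μ * y ^ 2
      + (1/2) * ν * ((1/2) * y ^ 2 - α * y) ^ 2 - (α * μ + β) * y)
    (v₀ : ℝ) (hv₀ : v₀ = α + β / (ρ + μ)) :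
    deriv p v₀ = 0 ∧ iteratedDeriv 2 p v₀ = 0 ∧
      iteratedDeriv 3 p v₀ = 3 * ν * β / (ρ + μ) ∧
      3 * ν * β / (ρ + μ) ≠ 0 ∧
      ¬ IsLocalMin p v₀ ∧ ¬ IsLocalMax p v₀ := by
  have hρμ : ρ + μ ≠ 0 := by
    have : ρ + μ < 0 := by rw [hρ]; linarith
    exact this.ne
  set t := β / (ρ + μ) with ht_def
  have hβν : ν * β ^ 2 = -(ρ + μ) ^ 3 := by
    rw [hβ, hη, hρ]; field_simp; ring
  have ht : ν * t ^ 2 = -(ρ + μ) := by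
    rw [div_pow, mul_div_assoc', hβν]; field_simp
  have hexp : ∀ h, p (v₀ + h) = p v₀ + h ^ 3 * (ν * t / 2 + ν / 8 * h) := by
    rw [hv₀]
    exact quartic_cubic_expansion hp hρ (div_mul_cancel₀ β hρμ).symm ht
  have hc : ν * t / 2 ≠ 0 := by positivity
  obtain ⟨hd1, hd2, hd3⟩ := deriv_iteratedDeriv_of_cubic_expansion hexp
  have hcoeff : 3 * ν * β / (ρ + μ) = 6 * (ν * t / 2) := by rw [ht_def]; ring
  exact ⟨hd1, hd2, hd3.trans hcoeff.symm, by rw [hcoeff]; positivity,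
    not_isLocalMin_of_cubic_expansion hc hexp, not_isLocalMax_of_cubic_expansion hc hexp⟩

theorem stmt_14 (μ ν α β : ℝ) (hμ : 0 < μ) (hν : 0 < ν)
    (hcase : ν * α ^ 2 > 2 * μ)
    (η ρ : ℝ) (hη : η = (ν * α ^ 2 - 2 * μ) ^ 3 / (27 * ν))
    (hρ : ρ = -(1/3) * (μ + ν * α ^ 2))
    (hβ : β ^ 2 = η) (hβ0 : β ≠ 0)
    (p : ℝ → ℝ)
    (hp : ∀ y : ℝ, p y = (1/2) * μ * y ^ 2
      + (1/2) * ν * ((1/2) * y ^ 2 - α * y) ^ 2 - (α * μ + β) * y)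
    (v₀ : ℝ) (hv₀ : v₀ = α + β / (ρ + μ)) :
    deriv p v₀ = 0 ∧ iteratedDeriv 2 p v₀ = 0 ∧
      iteratedDeriv 3 p v₀ = 3 * ν * β / (ρ + μ) ∧
      3 * ν * β / (ρ + μ) ≠ 0 ∧
      ¬ IsLocalMin p v₀ ∧ ¬ IsLocalMax p v₀ :=
  stmt_14_general μ ν α β hν hcase η ρ hη hρ hβ hβ0 p hp v₀ hv₀
end
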